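/- Let G_k be the k-th Burling graph with probe family P_k, and let H_k be obtained from G_k by adding, for each probe P ∈ P_k, a new vertex adjacent exactly to the vertices of P. Then H_k is triangle-free and χ(H_k) > k. -/

import Mathlib

/-- Probe index type for the Burling construction: level `n` corresponds to the graph
`G_{n+1}` of the paper. A probe of level `n + 1` is given by a probe `P` of the outer
copy, a probe `Q` of the inner copy placed in `P`, and a Boolean flag (`false` = lower
probe `P ∪ Q`, `true` = upper probe `P ∪ {d_{P,Q}}`). -/
def BurlingProbeIdx : ℕ → Type
  | 0 => Unit
  | n + 1 => BurlingProbeIdx n × BurlingProbeIdx n × Bool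

/-- Vertex type of the Burling graph of level `n` (the graph `G_{n+1}` of the paper):
level `n + 1` consists of an outer copy of level `n`, an inner copy of level `n` for
each probe `P`, and a diagonal vertex `d_{P,Q}` for each probe `P` of the outer copy
and each probe `Q` of the inner copy attached to `P`. -/
def BurlingVertex : ℕ → Type
  | 0 => Unit
  | n + 1 =>
      BurlingVertex n ⊕
        (BurlingProbeIdx n × BurlingVertex n) ⊕
        (BurlingProbeIdx n × BurlingProbeIdx n)

instance instFintypeBurlingProbeIdx : ∀ n, Fintype (BurlingProbeIdx n)
  | 0 => inferInstanceAs (Fintype Unit)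
  | n + 1 =>
      letI := instFintypeBurlingProbeIdx n
      inferInstanceAs (Fintype (BurlingProbeIdx n × BurlingProbeIdx n × Bool))

instance instFintypeBurlingVertex : ∀ n, Fintype (BurlingVertex n)
  | 0 => inferInstanceAs (Fintype Unit)
  | n + 1 =>
      letI := instFintypeBurlingVertex n
      inferInstanceAs (Fintype (BurlingVertex n ⊕
        (BurlingProbeIdx n × BurlingVertex n) ⊕
        (BurlingProbeIdx n × BurlingProbeIdx n)))

/-- The set of vertices pierced by a probe in the Burling construction. -/
def burlingProbe : (n : ℕ) → BurlingProbeIdx n → Set (BurlingVertex n)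
  | 0, _ => Set.univ
  | n + 1, ⟨P, Q, b⟩ =>
      (Sum.inl '' burlingProbe n P) ∪
        (if b then {Sum.inr (Sum.inr (P, Q))}
         else (fun v => Sum.inr (Sum.inl (P, v))) '' burlingProbe n Q)

/-- One-directional adjacency relation generating the Burling graph of level `n`. -/
def burlingRel : (n : ℕ) → BurlingVertex n → BurlingVertex n → Prop
  | 0, _, _ => False
  | n + 1, x, y =>
      match x, y with
      | Sum.inl u, Sum.inl v => burlingRel n u v
      | Sum.inr (Sum.inl (P, u)), Sum.inr (Sum.inl (P', v)) => P = P' ∧ burlingRel n u v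
      | Sum.inr (Sum.inr (P, Q)), Sum.inr (Sum.inl (P', v)) => P = P' ∧ v ∈ burlingProbe n Q
      | _, _ => False

/-- The Burling graph of level `n` (the graph `G_{n+1}` of the paper). -/
def BurlingGraph (n : ℕ) : SimpleGraph (BurlingVertex n) :=
  SimpleGraph.fromRel (burlingRel n)

/-- The graph `H_k`: the Burling graph `G_k` together with, for each probe, a new apex
vertex adjacent exactly to the vertices of that probe. (Level `n` here is `H_{n+1}`.) -/
def BurlingH (n : ℕ) : SimpleGraph (BurlingVertex n ⊕ BurlingProbeIdx n) :=
  SimpleGraph.fromRel (fun x y =>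
    match x, y with
    | Sum.inl u, Sum.inl v => burlingRel n u v
    | Sum.inr i, Sum.inl v => v ∈ burlingProbe n i
    | _, _ => False)

/-!
Probes are independent sets, and a diagonal vertex `d_{P,Q}` is adjacent only to the vertices
of `Q` in the copy attached to `P`. Hence a triangle of `G_{k+1}` lies inside one copy of `G_k`
or consists of a diagonal vertex and an edge inside a probe, which is impossible; the apex
vertices of `H_k` are excluded in the same way. Every proper colouring of `G_k` uses at least
`k` colours on some probe `P`, so a `k`-colouring of `H_k` leaves no colour for the apex of `P`.
-/

open SimpleGraph Relation

section Construction

variable (n : ℕ)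

def burlingOuter : BurlingVertex n → BurlingVertex (n + 1) :=
  Sum.inl

def burlingInner (P : BurlingProbeIdx n) : BurlingVertex n → BurlingVertex (n + 1) :=
  fun v => Sum.inr (Sum.inl (P, v))

def burlingDiag (P Q : BurlingProbeIdx n) : BurlingVertex (n + 1) :=
  Sum.inr (Sum.inr (P, Q))

variable {n}

lemma burlingRel_diag_inner {P Q : BurlingProbeIdx n} {v : BurlingVertex n}
    (hv : v ∈ burlingProbe n Q) : burlingRel (n + 1) (burlingDiag n P Q) (burlingInner n P v) :=
  ⟨rfl, hv⟩

lemma burlingRel_inner {P : BurlingProbeIdx n} {u v : BurlingVertex n}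
    (h : burlingRel n u v) : burlingRel (n + 1) (burlingInner n P u) (burlingInner n P v) :=
  ⟨rfl, h⟩

lemma burlingProbe_succ_lower (P Q : BurlingProbeIdx n) :
    burlingProbe (n + 1) (P, Q, false) =
      burlingOuter n '' burlingProbe n P ∪ burlingInner n P '' burlingProbe n Q :=
  rfl

lemma burlingProbe_succ_upper (P Q : BurlingProbeIdx n) :
    burlingProbe (n + 1) (P, Q, true) =
      insert (burlingDiag n P Q) (burlingOuter n '' burlingProbe n P) :=
  Set.union_singleton

end Construction

lemma not_symmGen_burlingRel_of_mem_burlingProbe :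
    ∀ {n : ℕ} {P : BurlingProbeIdx n} {u v : BurlingVertex n},
      u ∈ burlingProbe n P → v ∈ burlingProbe n P → ¬ SymmGen (burlingRel n) u v
  | 0, _, _, _, _, _, h => h.elim id id
  | n + 1, (P, Q, false), _, _, hu, hv, h => by
    rw [burlingProbe_succ_lower] at hu hv
    rcases hu with ⟨u, hu, rfl⟩ | ⟨u, hu, rfl⟩ <;> rcases hv with ⟨v, hv, rfl⟩ | ⟨v, hv, rfl⟩
    · exact not_symmGen_burlingRel_of_mem_burlingProbe hu hv h
    · exact h.elim id id
    · exact h.elim id id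
    · exact not_symmGen_burlingRel_of_mem_burlingProbe hu hv (h.imp And.right And.right)
  | n + 1, (P, Q, true), _, _, hu, hv, h => by
    rw [burlingProbe_succ_upper] at hu hv
    rcases hu with rfl | ⟨u, hu, rfl⟩ <;> rcases hv with rfl | ⟨v, hv, rfl⟩
    · exact h.elim id id
    · exact h.elim id id
    · exact h.elim id id
    · exact not_symmGen_burlingRel_of_mem_burlingProbe hu hv h

lemma burlingRel_triangleFree : ∀ {n : ℕ} {a b c : BurlingVertex n},
    SymmGen (burlingRel n) a b → SymmGen (burlingRel n) a c → SymmGen (burlingRel n) b c → False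
  | 0, _, _, _, hab, _, _ => hab.elim id id
  | n + 1, a, b, c, hab, hac, hbc => by
    rcases a with a | ⟨⟨Pa, a⟩ | ⟨Pa, Qa⟩⟩ <;>
      rcases b with b | ⟨⟨Pb, b⟩ | ⟨Pb, Qb⟩⟩ <;>
      rcases c with c | ⟨⟨Pc, c⟩ | ⟨Pc, Qc⟩⟩ <;>
      simp only [SymmGen, burlingRel, or_false, false_or, or_self] at hab hac hbc
    · exact burlingRel_triangleFree hab hac hbc
    · exact burlingRel_triangleFree (hab.imp And.right And.right) (hac.imp And.right And.right)
        (hbc.imp And.right And.right)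
    · exact not_symmGen_burlingRel_of_mem_burlingProbe hac.2 hbc.2 (hab.imp And.right And.right)
    · exact not_symmGen_burlingRel_of_mem_burlingProbe hab.2 hbc.2 (hac.imp And.right And.right)
    · exact not_symmGen_burlingRel_of_mem_burlingProbe hab.2 hac.2 (hbc.imp And.right And.right)

lemma exists_burlingProbe_le_ncard_image : ∀ (n : ℕ) {α : Type*} (c : BurlingVertex n → α),
    (∀ u v, burlingRel n u v → c u ≠ c v) → ∃ P, n + 1 ≤ (c '' burlingProbe n P).ncard
  | 0, _, c, _ => ⟨(), (Set.ncard_pos ((Set.toFinite _).image c)).mpr ⟨c (), (), trivial, rfl⟩⟩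
  | n + 1, _, c, hc => by
    obtain ⟨P, hP⟩ := exists_burlingProbe_le_ncard_image n (c ∘ burlingOuter n)
      fun u v h => hc _ _ h
    obtain ⟨Q, hQ⟩ := exists_burlingProbe_le_ncard_image n (c ∘ burlingInner n P)
      fun u v h => hc _ _ (burlingRel_inner h)
    set A := (c ∘ burlingOuter n) '' burlingProbe n P
    set B := (c ∘ burlingInner n P) '' burlingProbe n Q
    set d := burlingDiag n P Q
    -- The diagonal vertex `d` sees all of `Q`, so its colour is new on `B`; it is either
    -- also new on `A` (take the upper probe) or already on `A` (take the lower probe).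
    by_cases hdA : c d ∈ A
    · refine ⟨(P, Q, false), ?_⟩
      have hdB : c d ∉ B := by
        rintro ⟨v, hv, hdv⟩
        exact hc d _ (burlingRel_diag_inner hv) hdv.symm
      calc n + 1 + 1 ≤ (insert (c d) B).ncard := by
            rw [Set.ncard_insert_of_notMem hdB (Set.toFinite B)]; omega
        _ ≤ (A ∪ B).ncard :=
            Set.ncard_le_ncard (Set.insert_subset (Or.inl hdA) Set.subset_union_right)
        _ = _ := by
            rw [burlingProbe_succ_lower, Set.image_union, ← Set.image_comp, ← Set.image_comp]
    · refine ⟨(P, Q, true), ?_⟩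
      rw [burlingProbe_succ_upper, Set.image_insert_eq, ← Set.image_comp,
        Set.ncard_insert_of_notMem hdA (Set.toFinite A)]
      omega

section BurlingH

variable {n : ℕ}

lemma burlingH_adj_inl_inl {u v : BurlingVertex n} :
    (BurlingH n).Adj (Sum.inl u) (Sum.inl v) ↔ SymmGen (burlingRel n) u v := by
  refine ⟨fun h => h.2, fun h => ⟨?_, h⟩⟩
  rintro huv
  cases Sum.inl_injective huv
  exact burlingRel_triangleFree h h h

lemma burlingH_adj_inr_inl {P : BurlingProbeIdx n} {v : BurlingVertex n} :
    (BurlingH n).Adj (Sum.inr P) (Sum.inl v) ↔ v ∈ burlingProbe n P := by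
  simp [BurlingH]

lemma burlingH_not_adj_inr_inr {P Q : BurlingProbeIdx n} :
    ¬ (BurlingH n).Adj (Sum.inr P) (Sum.inr Q) := by
  simp [BurlingH]

variable (n)

lemma burlingH_cliqueFree_three : (BurlingH n).CliqueFree 3 := by
  classical
  intro s hs
  obtain ⟨x, y, z, hxy, hxz, hyz, -⟩ := is3Clique_iff.mp hs
  rcases x with x | P <;> rcases y with y | Q <;> rcases z with z | R
  · exact burlingRel_triangleFree (burlingH_adj_inl_inl.mp hxy) (burlingH_adj_inl_inl.mp hxz)
      (burlingH_adj_inl_inl.mp hyz)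
  · exact not_symmGen_burlingRel_of_mem_burlingProbe (burlingH_adj_inr_inl.mp hxz.symm)
      (burlingH_adj_inr_inl.mp hyz.symm) (burlingH_adj_inl_inl.mp hxy)
  · exact not_symmGen_burlingRel_of_mem_burlingProbe (burlingH_adj_inr_inl.mp hxy.symm)
      (burlingH_adj_inr_inl.mp hyz) (burlingH_adj_inl_inl.mp hxz)
  · exact burlingH_not_adj_inr_inr hyz
  · exact not_symmGen_burlingRel_of_mem_burlingProbe (burlingH_adj_inr_inl.mp hxy)
      (burlingH_adj_inr_inl.mp hxz) (burlingH_adj_inl_inl.mp hyz)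
  · exact burlingH_not_adj_inr_inr hxz
  · exact burlingH_not_adj_inr_inr hxy
  · exact burlingH_not_adj_inr_inr hxy

lemma burlingH_not_colorable : ¬ (BurlingH n).Colorable (n + 1) := by
  classical
  rintro ⟨C⟩
  obtain ⟨P, hP⟩ := exists_burlingProbe_le_ncard_image n (C ∘ Sum.inl)
    fun u v h => C.valid (burlingH_adj_inl_inl.mpr (Or.inl h))
  have hall : (C ∘ Sum.inl) '' burlingProbe n P = Set.univ :=
    Set.eq_of_subset_of_ncard_le (Set.subset_univ _) (by simpa using hP)
  obtain ⟨v, hv, hCv⟩ : C (Sum.inr P) ∈ (C ∘ Sum.inl) '' burlingProbe n P :=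
    hall ▸ Set.mem_univ _
  exact C.valid (burlingH_adj_inr_inl.mpr hv) hCv.symm

end BurlingH

theorem burlingH_triangleFree_chromatic (n : ℕ) :
    (BurlingH n).CliqueFree 3 ∧ ((n + 1 : ℕ) : ℕ∞) < (BurlingH n).chromaticNumber := by
  refine ⟨burlingH_cliqueFree_three n, ?_⟩
  rw [← not_le, chromaticNumber_le_iff_colorable]
  exact burlingH_not_colorable n
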